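/- arXiv:1904.12563 — 2 statements merged into one kernel-verified Lean document; each statement's English description precedes it below -/
import Mathlib

section
/- Let S/S_0 be a cyclic Galois extension of commutative rings of degree m with Galois group generated by σ, and let d ∈ S^×. The nonassociative cyclic algebra (S/S_0, σ, d) = S[t;σ]/S[t;σ](t^m − d) is associative if and only if d ∈ S_0. -/
open Finset

/-- The multiplication of the Petit algebra `(S/S₀,σ,d) = S[t;σ]/S[t;σ](t^m − d)` on
coefficient vectors `Fin m → S`. -/
def pmul {S : Type*} [Ring S] (σ : S ≃+* S) (d : S) (m : ℕ) (a b : Fin m → S) :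
    Fin m → S := fun k =>
  ∑ i : Fin m, ∑ j : Fin m,
    if (i : ℕ) + j = k then a i * (σ ^ (i : ℕ)) (b j)
    else if (i : ℕ) + j = (k : ℕ) + m then a i * (σ ^ (i : ℕ)) (b j) * (σ ^ (k : ℕ)) d
    else 0

/-- `S/S₀` is a cyclic Galois extension of commutative rings of degree `m` with Galois group
generated by `σ` (where `S₀ = Fix(σ)`): `σ^m = 1` and for each `j < m` there are Galois
coordinates `xₗ, yₗ` with `∑ xₗ σ^i(yₗ) = δ_{ij}` for `i < m`. -/
def CyclicGaloisExtension {S : Type*} [CommRing S] (σ : S ≃+* S) (m : ℕ) : Prop :=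
  0 < m ∧ σ ^ m = 1 ∧
    ∀ j < m, ∃ (n : ℕ) (x y : Fin n → S),
      ∀ i < m, (∑ l, x l * (σ ^ i) (y l)) = if i = j then 1 else 0

/-!
In `S[t;σ]/(t^m - d)` with `σ d = d` one has `t^n = d^(n / m) t^(n % m)`, so monomials multiply as
`(x t^i)(y t^j) = x σ^i(y) d^((i + j) / m) t^((i + j) % m)`. Associativity on monomials then comes
down to `σ^m = 1` and `(i + j) / m + ((i + j) % m + l) / m = (i + j + l) / m`, and biadditivity of
the product extends it to all elements. Conversely, for `m ≥ 2`, `(t t^(m-1)) t = d t` while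
`t (t^(m-1) t) = σ(d) t`.
-/

theorem Nat.div_add_mod_add_div (a b m : ℕ) : a / m + (a % m + b) / m = (a + b) / m := by
  rcases m.eq_zero_or_pos with rfl | hm
  · simp
  · conv_rhs => rw [← Nat.mod_add_div a m]
    rw [add_right_comm, Nat.add_mul_div_left _ _ hm, add_comm]

theorem AddMonoidHom.assoc_of_pi_single {ι A : Type*} [Fintype ι] [DecidableEq ι]
    [AddCommMonoid A] (μ : (ι → A) →+ (ι → A) →+ (ι → A))
    (h : ∀ i j l (x y z : A), μ (μ (Pi.single i x) (Pi.single j y)) (Pi.single l z) =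
      μ (Pi.single i x) (μ (Pi.single j y) (Pi.single l z)))
    (a b c : ι → A) : μ (μ a b) c = μ a (μ b c) := by
  rw [← univ_sum_single a, ← univ_sum_single b, ← univ_sum_single c]
  simp only [map_sum, AddMonoidHom.finsetSum_apply, h]

theorem RingAut.pow_apply_eq_self {R : Type*} [NonAssocSemiring R] {σ : R ≃+* R} {x : R}
    (hx : σ x = x) (n : ℕ) : (σ ^ n) x = x := by
  induction n with
  | zero => rfl
  | succ n ih => rw [pow_succ, RingAut.mul_apply, hx, ih]

section Ring
variable {S : Type*} [Ring S] (σ : S ≃+* S) (d : S) (m : ℕ)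

theorem pmul_apply_eq_sum (a b : Fin m → S) (k : Fin m) :
    pmul σ d m a b k = ∑ i : Fin m, ∑ j : Fin m, a i * (σ ^ (i : ℕ)) (b j) *
      if (i : ℕ) + j = k then 1 else if (i : ℕ) + j = (k : ℕ) + m then (σ ^ (k : ℕ)) d else 0 := by
  refine sum_congr rfl fun i _ => sum_congr rfl fun j _ => ?_
  split_ifs <;> simp

theorem add_pmul (a a' b : Fin m → S) :
    pmul σ d m (a + a') b = pmul σ d m a b + pmul σ d m a' b := by
  funext k
  simp only [Pi.add_apply, pmul_apply_eq_sum, add_mul, sum_add_distrib]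

theorem pmul_add (a b b' : Fin m → S) :
    pmul σ d m a (b + b') = pmul σ d m a b + pmul σ d m a b' := by
  funext k
  simp only [Pi.add_apply, pmul_apply_eq_sum, map_add, mul_add, add_mul, sum_add_distrib]

def pmulHom : (Fin m → S) →+ (Fin m → S) →+ (Fin m → S) :=
  AddMonoidHom.mk' (fun a => AddMonoidHom.mk' (pmul σ d m a) (pmul_add σ d m a))
    fun a a' => AddMonoidHom.ext (add_pmul σ d m a a')

theorem pmulHom_apply (a b : Fin m → S) : pmulHom σ d m a b = pmul σ d m a b := rfl

theorem pmul_single_single (i j : Fin m) (x y : S) :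
    pmul σ d m (Pi.single i x) (Pi.single j y) = Pi.single (i + j)
      (x * (σ ^ (i : ℕ)) y * if (i : ℕ) + j < m then 1 else (σ ^ ((i + j : Fin m) : ℕ)) d) := by
  funext k
  rw [pmul_apply_eq_sum, sum_eq_single i, sum_eq_single j]
  · have := i.isLt; have := j.isLt
    by_cases hlt : (i : ℕ) + j < m
    · have hv : ((i + j : Fin m) : ℕ) = i + j := by rw [Fin.val_add, Nat.mod_eq_of_lt hlt]
      simp only [Pi.single_eq_same, Pi.single_apply, Fin.ext_iff, hv, if_pos hlt]
      split_ifs <;> first | omega | simp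
    · have hv : ((i + j : Fin m) : ℕ) = i + j - m := by
        rw [Fin.val_add, Nat.mod_eq_sub_mod (by omega), Nat.mod_eq_of_lt (by omega)]
      simp only [Pi.single_eq_same, Pi.single_apply, Fin.ext_iff, hv, if_neg hlt]
      split_ifs with h₁ h₂ <;> first | omega | simp
      rw [show (i : ℕ) + j - m = k by omega]
  · intro j' _ hj'
    simp [Pi.single_eq_of_ne hj']
  · simp
  · intro i' _ hi'
    simp [Pi.single_eq_of_ne hi']
  · simp

theorem apply_eq_of_pmul_assoc (n : ℕ)
    (h : ∀ a b c : Fin (n + 2) → S,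
      pmul σ d (n + 2) (pmul σ d (n + 2) a b) c = pmul σ d (n + 2) a (pmul σ d (n + 2) b c)) :
    σ d = d := by
  have key := congrFun (h (Pi.single 1 1) (Pi.single (Fin.last (n + 1)) 1) (Pi.single 1 1)) 1
  have hwrap : (1 : Fin (n + 2)) + Fin.last (n + 1) = 0 := (add_comm _ _).trans (Fin.last_add_one _)
  have hwrap_val : ¬ 1 + (n + 1) < n + 2 := by omega
  simpa [pmul_single_single, hwrap, hwrap_val, eq_comm] using key

end Ring

section CommRing
variable {S : Type*} [CommRing S] {σ : S ≃+* S} {d : S} {m : ℕ}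

theorem pmul_single_single_of_apply_eq (hd : σ d = d) (i j : Fin m) (x y : S) :
    pmul σ d m (Pi.single i x) (Pi.single j y) =
      Pi.single (i + j) (x * (σ ^ (i : ℕ)) y * d ^ (((i : ℕ) + j) / m)) := by
  have := i.isLt; have := j.isLt
  rw [pmul_single_single, RingAut.pow_apply_eq_self hd]
  split_ifs with hlt
  · rw [Nat.div_eq_of_lt hlt, pow_zero]
  · rw [Nat.div_eq_of_lt_le (k := 1) (by omega) (by omega), pow_one]

theorem pmul_assoc_of_apply_eq (hσ : σ ^ m = 1) (hd : σ d = d) (a b c : Fin m → S) :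
    pmul σ d m (pmul σ d m a b) c = pmul σ d m a (pmul σ d m b c) := by
  refine (pmulHom σ d m).assoc_of_pi_single (fun i j l x y z => ?_) a b c
  simp only [pmulHom_apply, pmul_single_single_of_apply_eq hd, add_assoc, map_mul, map_pow,
    RingAut.pow_apply_eq_self hd, ← RingAut.mul_apply, ← pow_add, Fin.val_add, ← pow_eq_pow_mod _ hσ]
  have hexp : ((i : ℕ) + j) / m + (((i : ℕ) + j) % m + l) / m =
      ((j : ℕ) + l) / m + ((i : ℕ) + ((j : ℕ) + l) % m) / m := by
    rw [Nat.div_add_mod_add_div, add_comm (i : ℕ) (((j : ℕ) + l) % m), Nat.div_add_mod_add_div,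
      add_comm ((j : ℕ) + l), ← add_assoc]
  have hd_pow : d ^ (((i : ℕ) + j) / m) * d ^ ((((i : ℕ) + j) % m + l) / m) =
      d ^ (((j : ℕ) + l) / m) * d ^ (((i : ℕ) + ((j : ℕ) + l) % m) / m) := by
    rw [← pow_add, ← pow_add, hexp]
  congr 1
  linear_combination x * (σ ^ (i : ℕ)) y * (σ ^ ((i : ℕ) + j)) z * hd_pow

end CommRing

theorem cyclic_petit_associative_iff_general {S : Type*} [CommRing S]
    (σ : S ≃+* S) (m : ℕ) (hGal : CyclicGaloisExtension σ m)
    (d : S) :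
    (∀ a b c : Fin m → S, pmul σ d m (pmul σ d m a b) c = pmul σ d m a (pmul σ d m b c))
      ↔ σ d = d := by
  obtain ⟨hm, hσ, -⟩ := hGal
  refine ⟨fun hassoc => ?_, pmul_assoc_of_apply_eq hσ⟩
  rcases Nat.lt_or_ge m 2 with hm2 | hm2
  · obtain rfl : m = 1 := by omega
    rw [pow_one] at hσ
    simp [hσ]
  · obtain ⟨n, rfl⟩ := Nat.exists_eq_add_of_le' hm2
    exact apply_eq_of_pmul_assoc σ d n hassoc

/-- Let `S/S₀` be a cyclic Galois extension of commutative rings of degree `m`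
with Galois group generated by `σ`, and `d ∈ Sˣ`.  The nonassociative cyclic algebra
`(S/S₀,σ,d) = S[t;σ]/S[t;σ](t^m − d)` is associative if and only if `d ∈ S₀ = Fix(σ)`. -/
theorem cyclic_petit_associative_iff {S : Type*} [CommRing S]
    (σ : S ≃+* S) (m : ℕ) (hGal : CyclicGaloisExtension σ m)
    (d : S) (hd : IsUnit d) :
    (∀ a b c : Fin m → S, pmul σ d m (pmul σ d m a b) c = pmul σ d m a (pmul σ d m b c))
      ↔ σ d = d :=
  cyclic_petit_associative_iff_general σ m hGal d
end

section
/- Let S/S_0 be a cyclic Galois extension of commutative rings of degree m with Galois group generated by σ, d ∈ S^×, and let s be the smallest positive integer with d ∈ Fix(σ^s). If s divides m, say m = rs, then the S_0-submodule S ⊕ St^s ⊕ ⋯ ⊕ St^{(r−1)s} is contained in the right nucleus of the nonassociative cyclic algebra (S/S_0, σ, d). -/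
/-!
Write elements of `(S/S₀,σ,d)` as `∑ aᵢ tⁱ`. Then `tⁱ tʲ = c(i,j) t^(i+j)` with exponents in
`ℤ/m` and `c(i,j) ∈ {1, σ^(i+j-m) d}`, so associativity `(y z) x = y (z x)` on monomials with
`x = t^l` is the cocycle identity `c(i,j) c(i+j,l) = σⁱ(c(j,l)) c(i,j+l)`. Both sides are
products of values `σ^e d` whose exponents agree up to a shift by `l`, and such a shift fixes
`σ^e d` as soon as `s ∣ l`, because `σ^s` fixes `d`.
-/

open Finset

section
variable {S : Type*} [CommRing S]

lemma pow_val_add_eq_mul {G : Type*} [Monoid G] {g : G} {m : ℕ} (hg : g ^ m = 1)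
    (i j : Fin m) : g ^ ((i + j : Fin m) : ℕ) = g ^ (i : ℕ) * g ^ (j : ℕ) := by
  rw [Fin.val_add, ← pow_eq_pow_mod _ hg, pow_add]

lemma ringEquiv_pow_add_apply_of_dvd {σ : S ≃+* S} {d : S} {s l : ℕ} (hds : (σ ^ s) d = d)
    (hsl : s ∣ l) (e : ℕ) : (σ ^ (e + l)) d = (σ ^ e) d := by
  obtain ⟨n, rfl⟩ := hsl
  induction n with
  | zero => rfl
  | succ n ih => rw [Nat.mul_succ, ← add_assoc, pow_add, RingAut.mul_apply, hds, ih]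

/-- In `(S/S₀,σ,d)`, `t^i t^j = petitCocycle σ d i j · t^(i+j)`, exponents taken in `Fin m`. -/
def petitCocycle (σ : S ≃+* S) (d : S) {m : ℕ} (i j : Fin m) : S :=
  if (i : ℕ) + j < m then 1 else (σ ^ ((i : ℕ) + j - m)) d

lemma pmul_apply (σ : S ≃+* S) (d : S) {m : ℕ} (a b : Fin m → S) (k : Fin m) :
    pmul σ d m a b k =
      ∑ i : Fin m, ∑ j : Fin m,
        if i + j = k then a i * (σ ^ (i : ℕ)) (b j) * petitCocycle σ d i j else 0 := by
  refine sum_congr rfl fun i _ => sum_congr rfl fun j _ => ?_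
  have hk := k.isLt
  simp only [petitCocycle, Fin.ext_iff, Fin.val_add_eq_ite]
  split_ifs <;> first | omega | simp_all

lemma petitCocycle_cocycle {σ : S ≃+* S} {d : S} {m s : ℕ} (hds : (σ ^ s) d = d)
    (i j l : Fin m) (hsl : s ∣ (l : ℕ)) :
    petitCocycle σ d i j * petitCocycle σ d (i + j) l =
      (σ ^ (i : ℕ)) (petitCocycle σ d j l) * petitCocycle σ d i (j + l) := by
  have hshift := ringEquiv_pow_add_apply_of_dvd hds hsl
  have hi := i.isLt; have hj := j.isLt; have hl := l.isLt
  simp only [petitCocycle, Fin.val_add_eq_ite]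
  split_ifs <;> first | omega | skip
  all_goals simp only [map_one, one_mul, mul_one, ← RingAut.mul_apply, ← pow_add]
  all_goals first
    | (congr 2; omega)
    | (rw [← hshift ((i : ℕ) + j - m)]; congr 2; omega)
    | (rw [← hshift ((i : ℕ) + j - m)]; congr 1 <;> congr 2 <;> omega)

lemma pmul_apply_eq_sum_sub (σ : S ≃+* S) (d : S) {m : ℕ} [NeZero m] (a b : Fin m → S)
    (k : Fin m) :
    pmul σ d m a b k =
      ∑ i : Fin m, a i * (σ ^ (i : ℕ)) (b (k - i)) * petitCocycle σ d i (k - i) := by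
  rw [pmul_apply]
  refine sum_congr rfl fun i _ => ?_
  simp only [← eq_sub_iff_add_eq', sum_ite_eq', mem_univ, if_true]

lemma pmul_assoc_of_cocycle {σ : S ≃+* S} {d : S} {m : ℕ} [NeZero m] (hσm : σ ^ m = 1)
    (x : Fin m → S)
    (hx : ∀ l, x l ≠ 0 → ∀ i j, petitCocycle σ d i j * petitCocycle σ d (i + j) l =
      (σ ^ (i : ℕ)) (petitCocycle σ d j l) * petitCocycle σ d i (j + l))
    (a b : Fin m → S) :
    pmul σ d m (pmul σ d m a b) x = pmul σ d m a (pmul σ d m b x) := by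
  funext k
  have lhs : pmul σ d m (pmul σ d m a b) x k = ∑ i : Fin m, ∑ j : Fin m,
      a i * (σ ^ (i : ℕ)) (b j) * petitCocycle σ d i j
        * (σ ^ ((i + j : Fin m) : ℕ)) (x (k - (i + j)))
        * petitCocycle σ d (i + j) (k - (i + j)) := by
    simp only [pmul_apply_eq_sum_sub, sum_mul]
    rw [sum_comm]
    refine sum_congr rfl fun i _ => ?_
    rw [← Equiv.sum_comp (Equiv.addLeft i)]
    simp only [Equiv.coe_addLeft, add_sub_cancel_left]
  have rhs : pmul σ d m a (pmul σ d m b x) k = ∑ i : Fin m, ∑ j : Fin m,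
      a i * (σ ^ (i : ℕ)) (b j * (σ ^ (j : ℕ)) (x (k - (i + j)))
        * petitCocycle σ d j (k - (i + j))) * petitCocycle σ d i (k - i) := by
    simp only [pmul_apply_eq_sum_sub, map_sum, mul_sum, sum_mul, sub_sub]
  rw [lhs, rhs]
  refine sum_congr rfl fun i _ => sum_congr rfl fun j _ => ?_
  have hk : k - i = j + (k - (i + j)) := by abel
  by_cases hl : x (k - (i + j)) = 0
  · simp [hl]
  · rw [hk, pow_val_add_eq_mul hσm, RingAut.mul_apply, map_mul, map_mul]
    linear_combination
      a i * (σ ^ (i : ℕ)) (b j) * (σ ^ (i : ℕ)) ((σ ^ (j : ℕ)) (x (k - (i + j)))) * hx _ hl i j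

end

theorem multiples_in_right_nucleus_general {S : Type*} [CommRing S]
    (σ : S ≃+* S) (m : ℕ) (hGal : CyclicGaloisExtension σ m)
    (d : S)
    (s : ℕ) (hds : (σ ^ s) d = d) :
    ∀ x : Fin m → S, (∀ i : Fin m, ¬ s ∣ (i : ℕ) → x i = 0) →
      ∀ a b : Fin m → S,
        pmul σ d m (pmul σ d m a b) x = pmul σ d m a (pmul σ d m b x) := by
  obtain ⟨hm0, hσm, -⟩ := hGal
  have : NeZero m := ⟨hm0.ne'⟩
  intro x hx a b
  refine pmul_assoc_of_cocycle hσm x (fun l hl i j => petitCocycle_cocycle hds i j l ?_) a b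
  by_contra hsl
  exact hl (hx l hsl)

/-- Let `S/S₀` be cyclic Galois of degree `m` with group `⟨σ⟩`, `d ∈ Sˣ`, and
let `s` be the smallest positive integer with `d ∈ Fix(σ^s)`.  If `s ∣ m`, say `m = r·s`,
then the `S₀`-submodule `S ⊕ St^s ⊕ ⋯ ⊕ St^{(r−1)s}` (the elements supported on exponents
divisible by `s`) is contained in the right nucleus of `(S/S₀, σ, d)`. -/
theorem multiples_in_right_nucleus {S : Type*} [CommRing S]
    (σ : S ≃+* S) (m : ℕ) (hGal : CyclicGaloisExtension σ m)
    (d : S) (hd : IsUnit d)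
    (s : ℕ) (hs : 0 < s) (hds : (σ ^ s) d = d)
    (hmin : ∀ j, 0 < j → j < s → (σ ^ j) d ≠ d)
    (r : ℕ) (hm : m = r * s) :
    ∀ x : Fin m → S, (∀ i : Fin m, ¬ s ∣ (i : ℕ) → x i = 0) →
      ∀ a b : Fin m → S,
        pmul σ d m (pmul σ d m a b) x = pmul σ d m a (pmul σ d m b x) :=
  multiples_in_right_nucleus_general σ m hGal d s hds
end
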